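/- arXiv:1102.0334 — 3 statements merged into one kernel-verified Lean document; each statement's English description precedes it below -/
import Mathlib

section
/- For a group G, the category of abelian group objects in the slice category Grp/G is equivalent to the category of (left) ℤ[G]-modules. The equivalence sends a G-module M to the split extension (semidirect product projection) M ⋊ G → G, and an abelian group object p : E → G to the kernel of p with the conjugation G-action. -/
open CategoryTheory

universe u

/-- An abelian group object in the slice category `Grp/G`: a group homomorphism
`p : E →* G` together with a unit section `zero`, a fiberwise addition `add` defined on the
fiber product `E ×_G E` (i.e. on pairs with `p x = p y`), and fiberwise negation `neg`, all
morphisms over `G`, satisfying the abelian group axioms.  This is Beck's notion of a module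
over `G`. -/
structure BeckModule (G : Type u) [Group G] : Type (u + 1) where
  E : Type u
  [grp : Group E]
  p : E →* G
  zero : G →* E
  neg : E →* E
  add : ∀ x y : E, p x = p y → E
  p_zero : ∀ g, p (zero g) = g
  p_neg : ∀ x, p (neg x) = p x
  p_add : ∀ x y h, p (add x y h) = p x
  /-- `add` is a group homomorphism on the fiber product. -/
  add_mul : ∀ x y x' y' (h : p x = p y) (h' : p x' = p y') (h'' : p (x * x') = p (y * y')),
    add (x * x') (y * y') h'' = add x y h * add x' y' h'
  zero_add : ∀ x (h : p (zero (p x)) = p x), add (zero (p x)) x h = x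
  add_assoc : ∀ x y z (hxy : p x = p y) (hyz : p y = p z) (h1 : p (add x y hxy) = p z)
    (h2 : p x = p (add y z hyz)), add (add x y hxy) z h1 = add x (add y z hyz) h2
  add_comm : ∀ x y (h : p x = p y) (h' : p y = p x), add x y h = add y x h'
  add_neg : ∀ x (h : p x = p (neg x)), add x (neg x) h = zero (p x)

attribute [instance] BeckModule.grp

variable {G : Type u} [Group G]

/-- Morphisms of abelian group objects in `Grp/G`: group homomorphisms over `G`
commuting with the fiberwise addition. -/
@[ext]
structure BeckModule.Hom (X Y : BeckModule G) where
  toHom : X.E →* Y.E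
  p_comm : ∀ x, Y.p (toHom x) = X.p x
  map_add : ∀ x y (h : X.p x = X.p y) (h' : Y.p (toHom x) = Y.p (toHom y)),
    toHom (X.add x y h) = Y.add (toHom x) (toHom y) h'

instance : Category (BeckModule G) where
  Hom X Y := BeckModule.Hom X Y
  id X := ⟨MonoidHom.id _, fun _ => rfl, fun _ _ _ _ => rfl⟩
  comp {X Y Z} f g := ⟨g.toHom.comp f.toHom,
    fun x => by simp [g.p_comm, f.p_comm],
    fun x y h h' => by
      simp only [MonoidHom.coe_comp, Function.comp_apply]
      rw [f.map_add x y h (by rw [f.p_comm, f.p_comm]; exact h), g.map_add]⟩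
  id_comp f := BeckModule.Hom.ext rfl
  comp_id f := BeckModule.Hom.ext rfl
  assoc f g h := BeckModule.Hom.ext rfl

/-!
The kernel `K` of `p : E →* G` is abelian by Eckmann–Hilton: the fibrewise addition is a
homomorphism on `E ×_G E`, and on `K ×_G K` it is forced to agree with multiplication. `G` acts
on `K` by conjugation through the unit section. Every `x : E` factors as `k * zero (p x)` with
`k ∈ K`, which identifies `E` with `K ⋊ G` and the fibrewise addition with addition in `K`.
Conversely the kernel of `M ⋊ G → G` is `M`, and conjugation by `G` recovers the module
action.
-/

lemma MonoidAlgebra.map_smul_of_map_single_one_smul {G M N : Type*} [Monoid G]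
    [AddCommGroup M] [AddCommGroup N] [Module (MonoidAlgebra ℤ G) M]
    [Module (MonoidAlgebra ℤ G) N] (f : M →+ N)
    (hf : ∀ (g : G) (m : M), f (single g (1 : ℤ) • m) = single g (1 : ℤ) • f m)
    (a : MonoidAlgebra ℤ G) (m : M) : f (a • m) = a • f m := by
  induction a using MonoidAlgebra.induction_on with
  | of g => exact hf g m
  | add a b ha hb => rw [add_smul, add_smul, map_add, ha, hb]
  | smul r a ha => rw [smul_assoc, smul_assoc, map_zsmul, ha]

namespace BeckModule

open SemidirectProduct

section Kernel

variable (X : BeckModule G)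

lemma add_congr {x x' y y' : X.E} (hx : x = x') (hy : y = y')
    (h : X.p x = X.p y) (h' : X.p x' = X.p y') : X.add x y h = X.add x' y' h' := by
  subst hx hy
  rfl

lemma add_zero_zero (g : G) (h : X.p (X.zero g) = X.p (X.zero g)) :
    X.add (X.zero g) (X.zero g) h = X.zero g :=
  (X.add_congr (by rw [X.p_zero]) rfl _ _).trans (X.zero_add _ (by rw [X.p_zero]))

lemma one_add {k : X.E} (hk : X.p k = 1) (h : X.p 1 = X.p k) : X.add 1 k h = k :=
  (X.add_congr (by rw [hk, map_one]) rfl _ _).trans (X.zero_add k (by rw [X.p_zero]))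

lemma add_one {k : X.E} (hk : X.p k = 1) (h : X.p k = X.p 1) : X.add k 1 h = k := by
  rw [X.add_comm k 1 h h.symm, X.one_add hk]

lemma add_of_mem_ker {k k' : X.E} (hk : X.p k = 1) (hk' : X.p k' = 1) (h : X.p k = X.p k') :
    X.add k k' h = k * k' := by
  have h₁ : X.p k = X.p 1 := by rw [hk, map_one]
  have h₂ : X.p 1 = X.p k' := by rw [hk', map_one]
  calc X.add k k' h = X.add (k * 1) (1 * k') (by simpa using h) :=
        X.add_congr (mul_one k).symm (one_mul k').symm _ _
    _ = X.add k 1 h₁ * X.add 1 k' h₂ := X.add_mul k 1 1 k' h₁ h₂ _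
    _ = k * k' := by rw [X.add_one hk, X.one_add hk']

lemma mul_comm_of_mem_ker {k k' : X.E} (hk : X.p k = 1) (hk' : X.p k' = 1) :
    k * k' = k' * k := by
  have h : X.p k = X.p k' := hk.trans hk'.symm
  rw [← X.add_of_mem_ker hk hk' h, ← X.add_of_mem_ker hk' hk h.symm, X.add_comm]

instance : CommGroup X.p.ker where
  mul_comm k k' := Subtype.ext (X.mul_comm_of_mem_ker k.2 k'.2)

def kerPart (x : X.E) : X.p.ker :=
  ⟨x * (X.zero (X.p x))⁻¹, by simp [X.p_zero]⟩

lemma kerPart_mul_zero (x : X.E) : (X.kerPart x : X.E) * X.zero (X.p x) = x :=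
  inv_mul_cancel_right x _

lemma kerPart_mul (x y : X.E) :
    (X.kerPart (x * y) : X.E) =
      X.kerPart x * (X.zero (X.p x) * X.kerPart y * (X.zero (X.p x))⁻¹) := by
  simp only [kerPart, map_mul]
  group

lemma add_eq {x y : X.E} (h : X.p x = X.p y) :
    X.add x y h = X.kerPart x * X.kerPart y * X.zero (X.p x) := by
  set z := X.zero (X.p x)
  have hk : X.p (x * z⁻¹) = 1 := (X.kerPart x).2
  have hk' : X.p (y * z⁻¹) = 1 := by simp [z, X.p_zero, h]
  have hkk' : X.p (x * z⁻¹) = X.p (y * z⁻¹) := hk.trans hk'.symm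
  have hy : (X.kerPart y : X.E) = y * z⁻¹ := by simp [kerPart, z, h]
  calc X.add x y h = X.add (x * z⁻¹ * z) (y * z⁻¹ * z) (by simpa using h) :=
        X.add_congr (by group) (by group) _ _
    _ = X.add (x * z⁻¹) (y * z⁻¹) hkk' * X.add z z rfl := X.add_mul _ _ _ _ hkk' rfl _
    _ = X.kerPart x * X.kerPart y * z := by
        rw [X.add_of_mem_ker hk hk' hkk', X.add_zero_zero, hy]
        rfl

lemma kerPart_add {x y : X.E} (h : X.p x = X.p y) :
    X.kerPart (X.add x y h) = X.kerPart x * X.kerPart y := by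
  refine Subtype.ext ?_
  change X.add x y h * (X.zero (X.p (X.add x y h)))⁻¹ = _
  rw [X.p_add, X.add_eq h, mul_inv_cancel_right]
  rfl

lemma eq_zero_of_add_self {x : X.E} (h : X.p x = X.p x) (hx : X.add x x h = x) :
    x = X.zero (X.p x) := by
  rw [X.add_eq h] at hx
  have hk : (X.kerPart x : X.E) * X.kerPart x = X.kerPart x := by
    simpa [kerPart, mul_assoc] using congrArg (· * (X.zero (X.p x))⁻¹) hx
  have hk1 : (X.kerPart x : X.E) = 1 := mul_eq_left.mp hk
  calc x = X.kerPart x * X.zero (X.p x) := (X.kerPart_mul_zero x).symm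
    _ = X.zero (X.p x) := by rw [hk1, one_mul]

noncomputable def conjRep : Representation ℤ G (Additive X.p.ker) :=
  letI : MulDistribMulAction G X.p.ker :=
    MulDistribMulAction.compHom _ ((MulAut.conjNormal (H := X.p.ker)).comp X.zero)
  Representation.ofMulDistribMulAction G X.p.ker

lemma coe_conjRep_apply (g : G) (k : Additive X.p.ker) :
    ((X.conjRep g k).toMul : X.E) = X.zero g * k.toMul * (X.zero g)⁻¹ :=
  MulAut.conjNormal_apply (H := X.p.ker) _ _

noncomputable instance : Module (MonoidAlgebra ℤ G) (Additive X.p.ker) :=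
  Module.compHom _ X.conjRep.asAlgebraHom.toRingHom

lemma single_one_smul (g : G) (k : Additive X.p.ker) :
    MonoidAlgebra.single g (1 : ℤ) • k = X.conjRep g k :=
  LinearMap.congr_fun (X.conjRep.asAlgebraHom_single_one g) k

lemma coe_toMul_single_one_smul (g : G) (k : Additive X.p.ker) :
    ((MonoidAlgebra.single g (1 : ℤ) • k).toMul : X.E) =
      X.zero g * k.toMul * (X.zero g)⁻¹ := by
  rw [single_one_smul, coe_conjRep_apply]

variable {X} {Y : BeckModule G}

/-- `f (zero g)` is idempotent for `Y.add`, so it is `Y.zero g` by `eq_zero_of_add_self`. -/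
lemma Hom.map_zero (f : X.Hom Y) (g : G) : f.toHom (X.zero g) = Y.zero g := by
  have hf : Y.p (f.toHom (X.zero g)) = g := by rw [f.p_comm, X.p_zero]
  have hidem : Y.add (f.toHom (X.zero g)) (f.toHom (X.zero g)) rfl = f.toHom (X.zero g) := by
    rw [← f.map_add _ _ rfl rfl, add_zero_zero]
  rw [Y.eq_zero_of_add_self rfl hidem, hf]

def Hom.kerMap (f : X.Hom Y) : X.p.ker →* Y.p.ker :=
  (f.toHom.comp X.p.ker.subtype).codRestrict _ fun k => by
    simpa [f.p_comm] using MonoidHom.mem_ker.mp k.2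

lemma Hom.kerMap_conjRep (f : X.Hom Y) (g : G) (k : Additive X.p.ker) :
    f.kerMap.toAdditive (X.conjRep g k) = Y.conjRep g (f.kerMap.toAdditive k) := by
  refine congrArg Additive.ofMul (Subtype.ext ?_)
  change f.toHom ((X.conjRep g k).toMul : X.E) = ((Y.conjRep g _).toMul : Y.E)
  rw [coe_conjRep_apply, coe_conjRep_apply, map_mul, map_mul, map_inv, f.map_zero]
  rfl

lemma Hom.kerPart_map (f : X.Hom Y) (x : X.E) : Y.kerPart (f.toHom x) = f.kerMap (X.kerPart x) := by
  refine Subtype.ext ?_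
  change f.toHom x * (Y.zero (Y.p (f.toHom x)))⁻¹ = f.toHom (x * (X.zero (X.p x))⁻¹)
  rw [map_mul, map_inv, f.map_zero, f.p_comm]

end Kernel

noncomputable def kerFunctor : BeckModule G ⥤ ModuleCat (MonoidAlgebra ℤ G) where
  obj X := ModuleCat.of _ (Additive X.p.ker)
  map f := ModuleCat.ofHom
    { toFun := f.kerMap.toAdditive
      map_add' := map_add _
      map_smul' := MonoidAlgebra.map_smul_of_map_single_one_smul _ fun g k => by
        rw [single_one_smul, single_one_smul]
        exact f.kerMap_conjRep g k }

section SplitExtension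

variable (G) (M : Type u) [AddCommGroup M] [Module (MonoidAlgebra ℤ G) M]

noncomputable def moduleAut : G →* MulAut (Multiplicative M) :=
  letI := DistribMulAction.compHom M (MonoidAlgebra.of ℤ G)
  (MulAutMultiplicative M).symm.toMonoidHom.comp (DistribMulAction.toAddAut G M)

lemma moduleAut_apply (g : G) (m : Multiplicative M) :
    moduleAut G M g m = Multiplicative.ofAdd (MonoidAlgebra.single g (1 : ℤ) • m.toAdd) := rfl

lemma inl_single_one_smul (g : G) (m : M) :
    (inl (Multiplicative.ofAdd (MonoidAlgebra.single g (1 : ℤ) • m)) :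
      Multiplicative M ⋊[moduleAut G M] G) =
      inr g * inl (Multiplicative.ofAdd m) * (inr g)⁻¹ := by
  rw [← map_inv]
  exact inl_aut g _

noncomputable def splitExt : BeckModule G where
  E := Multiplicative M ⋊[moduleAut G M] G
  p := rightHom
  zero := inr
  neg :=
    { toFun x := ⟨x.left⁻¹, x.right⟩
      map_one' := by ext <;> simp
      map_mul' a b := by ext <;> simp [mul_comm] }
  add x y _ := ⟨x.left * y.left, x.right⟩
  p_zero := rightHom_inr
  p_neg _ := rfl
  p_add _ _ _ := rfl
  add_mul x y x' y' h _ _ := by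
    have hr : y.right = x.right := h.symm
    ext
    · simp only [mul_left, hr, map_mul]
      exact congrArg Multiplicative.toAdd (mul_mul_mul_comm _ _ _ _)
    · rfl
  zero_add x _ := by ext <;> simp
  add_assoc x y z _ _ _ _ := by ext <;> simp [mul_assoc]
  add_comm x y h _ := by
    ext
    · simp [mul_comm]
    · exact h
  add_neg x _ := by ext <;> simp

noncomputable def splitExtKerEquiv : M ≃+ Additive (splitExt G M).p.ker :=
  MulEquiv.toAdditiveRight <| (MonoidHom.ofInjective inl_injective).trans
    (MulEquiv.subgroupCongr range_inl_eq_ker_rightHom)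

lemma splitExtKerEquiv_single_one_smul (g : G) (m : M) :
    splitExtKerEquiv G M (MonoidAlgebra.single g (1 : ℤ) • m) =
      MonoidAlgebra.single g (1 : ℤ) • splitExtKerEquiv G M m := by
  rw [single_one_smul]
  exact congrArg Additive.ofMul (Subtype.ext (inl_single_one_smul G M g m))

noncomputable def splitExtKerLinearEquiv :
    M ≃ₗ[MonoidAlgebra ℤ G] Additive (splitExt G M).p.ker :=
  { splitExtKerEquiv G M with
    map_smul' := MonoidAlgebra.map_smul_of_map_single_one_smul
      (splitExtKerEquiv G M).toAddMonoidHom (splitExtKerEquiv_single_one_smul G M) }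

variable {G M} {N : Type u} [AddCommGroup N] [Module (MonoidAlgebra ℤ G) N]

noncomputable def splitExtMap (f : M →ₗ[MonoidAlgebra ℤ G] N) :
    (splitExt G M).Hom (splitExt G N) where
  toHom := SemidirectProduct.map f.toAddMonoidHom.toMultiplicative (MonoidHom.id G) fun _ =>
    MonoidHom.ext fun m => congrArg Multiplicative.ofAdd (f.map_smul _ m.toAdd)
  p_comm _ := rfl
  map_add x y _ _ := SemidirectProduct.ext (map_add f x.left.toAdd y.left.toAdd) rfl

end SplitExtension

noncomputable def splitExtFunctor : ModuleCat (MonoidAlgebra ℤ G) ⥤ BeckModule G where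
  obj M := splitExt G M
  map f := splitExtMap f.hom

def isoOfMulEquiv {X Y : BeckModule G} (e : X.E ≃* Y.E) (he : ∀ x, Y.p (e x) = X.p x)
    (he_add : ∀ x y h h', e (X.add x y h) = Y.add (e x) (e y) h') : X ≅ Y where
  hom := ⟨e.toMonoidHom, he, he_add⟩
  inv :=
    { toHom := e.symm.toMonoidHom
      p_comm y := by simpa using (he (e.symm y)).symm
      map_add x y h h' := e.injective <| (e.apply_symm_apply _).trans <|
        (Y.add_congr (e.apply_symm_apply x).symm (e.apply_symm_apply y).symm _ _).trans
          (he_add _ _ h' (by simpa using h)).symm }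
  hom_inv_id := Hom.ext (MonoidHom.ext e.symm_apply_apply)
  inv_hom_id := Hom.ext (MonoidHom.ext e.apply_symm_apply)

noncomputable def mulEquivSemidirectProduct (X : BeckModule G) :
    X.E ≃* Multiplicative (Additive X.p.ker) ⋊[moduleAut G (Additive X.p.ker)] G where
  toFun x := ⟨Multiplicative.ofAdd (Additive.ofMul (X.kerPart x)), X.p x⟩
  invFun a := (a.left.toAdd.toMul : X.E) * X.zero a.right
  left_inv := X.kerPart_mul_zero
  right_inv a := by
    have hp : X.p ((a.left.toAdd.toMul : X.E) * X.zero a.right) = a.right := by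
      rw [map_mul, MonoidHom.mem_ker.mp a.left.toAdd.toMul.2, one_mul, X.p_zero]
    refine SemidirectProduct.ext (congrArg (Multiplicative.ofAdd ∘ Additive.ofMul) ?_) hp
    refine Subtype.ext ?_
    simp only [kerPart, hp, mul_inv_cancel_right]
    rfl
  map_mul' x y := by
    refine SemidirectProduct.ext ?_ (map_mul X.p x y)
    refine congrArg (Multiplicative.ofAdd ∘ Additive.ofMul) (Subtype.ext ?_)
    dsimp only
    rw [kerPart_mul, moduleAut_apply, single_one_smul, Subgroup.coe_mul]
    simp only [toAdd_ofAdd, toMul_ofMul]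
    rw [coe_conjRep_apply]
    rfl

noncomputable def unitIso : 𝟭 (BeckModule G) ≅ kerFunctor ⋙ splitExtFunctor :=
  NatIso.ofComponents
    (fun X => isoOfMulEquiv X.mulEquivSemidirectProduct (fun _ => rfl) fun x y h _ =>
      SemidirectProduct.ext (congrArg (Multiplicative.ofAdd ∘ Additive.ofMul) (X.kerPart_add h))
        (X.p_add x y h))
    fun f => Hom.ext <| MonoidHom.ext fun x =>
      SemidirectProduct.ext (congrArg (Multiplicative.ofAdd ∘ Additive.ofMul) (f.kerPart_map x))
        (f.p_comm x)

noncomputable def counitIso :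
    splitExtFunctor ⋙ kerFunctor ≅ 𝟭 (ModuleCat (MonoidAlgebra ℤ G)) :=
  NatIso.ofComponents (fun M => (splitExtKerLinearEquiv G M).symm.toModuleIso)
    fun {M N} f => ModuleCat.hom_ext <| LinearMap.ext fun k => by
      obtain ⟨m, rfl⟩ := (splitExtKerLinearEquiv G M).surjective k
      change (splitExtKerLinearEquiv G N).symm (splitExtKerLinearEquiv G N (f m)) =
        f ((splitExtKerLinearEquiv G M).symm (splitExtKerLinearEquiv G M m))
      simp only [LinearEquiv.symm_apply_apply]

noncomputable def equivalenceModuleMonoidAlgebra :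
    BeckModule G ≌ ModuleCat (MonoidAlgebra ℤ G) :=
  CategoryTheory.Equivalence.mk kerFunctor splitExtFunctor unitIso counitIso

end BeckModule

/-- Beck's theorem for groups: the category of abelian group objects in `Grp/G` is
equivalent to the category of left `ℤ[G]`-modules.  The forward functor sends an abelian
group object `p : E → G` to the kernel of `p`, with `G` acting by conjugation (through the
unit section); the inverse sends a `G`-module `M` to the split extension `M ⋊ G → G`,
whose kernel recovers `M`. -/
theorem beckModule_equivalence_modules (G : Type) [Group G] :
    ∃ e : BeckModule G ≌ ModuleCat (MonoidAlgebra ℤ G),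
      (∀ X : BeckModule G,
        ∃ φ : (e.functor.obj X : Type) ≃+ Additive (MonoidHom.ker X.p),
          ∀ (g : G) (m : (e.functor.obj X : Type)),
            ((Additive.toMul (φ ((MonoidAlgebra.single g (1 : ℤ)) • m)) : MonoidHom.ker X.p) : X.E) =
              X.zero g * ((Additive.toMul (φ m) : MonoidHom.ker X.p) : X.E) * (X.zero g)⁻¹) ∧
      (∀ M : ModuleCat (MonoidAlgebra ℤ G),
        ∃ ψ : (M : Type) ≃+ Additive (MonoidHom.ker (e.inverse.obj M).p),
          ∀ (g : G) (m : (M : Type)),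
            ((Additive.toMul (ψ ((MonoidAlgebra.single g (1 : ℤ)) • m)) : MonoidHom.ker (e.inverse.obj M).p) : (e.inverse.obj M).E) =
              (e.inverse.obj M).zero g * ((Additive.toMul (ψ m) : MonoidHom.ker (e.inverse.obj M).p) : (e.inverse.obj M).E) *
                ((e.inverse.obj M).zero g)⁻¹) := by
  refine ⟨BeckModule.equivalenceModuleMonoidAlgebra,
    fun X => ⟨AddEquiv.refl _, X.coe_toMul_single_one_smul⟩,
    fun M => ⟨BeckModule.splitExtKerEquiv G M, fun g m => ?_⟩⟩
  have h := congrArg (fun k => (k.toMul : (BeckModule.splitExt G M).E))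
    (BeckModule.splitExtKerEquiv_single_one_smul G M g m)
  exact h.trans ((BeckModule.splitExt G M).coe_toMul_single_one_smul g _)
end

section
/- For an abelian group A, the category of abelian group objects in the slice category Ab/A is equivalent to the category Ab of abelian groups, via the functors sending M to the projection A ⊕ M → A and sending an abelian group object p : E → A to ker(p). -/
open CategoryTheory

universe u

/-- An abelian group object in the slice category `Ab/A`: a homomorphism of abelian groups
`p : E →+ A` together with a unit section `zero`, a fiberwise addition `badd` defined on
pairs with `p x = p y`, and fiberwise negation `bneg`, all homomorphisms over `A`,
satisfying the abelian group axioms. -/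
structure BeckModuleAb (A : Type u) [AddCommGroup A] : Type (u + 1) where
  E : Type u
  [acg : AddCommGroup E]
  p : E →+ A
  zero : A →+ E
  bneg : E →+ E
  badd : ∀ x y : E, p x = p y → E
  p_zero : ∀ a, p (zero a) = a
  p_bneg : ∀ x, p (bneg x) = p x
  p_badd : ∀ x y h, p (badd x y h) = p x
  /-- `badd` is additive on the fiber product. -/
  badd_add : ∀ x y x' y' (h : p x = p y) (h' : p x' = p y') (h'' : p (x + x') = p (y + y')),
    badd (x + x') (y + y') h'' = badd x y h + badd x' y' h'
  zero_badd : ∀ x (h : p (zero (p x)) = p x), badd (zero (p x)) x h = x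
  badd_assoc : ∀ x y z (hxy : p x = p y) (hyz : p y = p z) (h1 : p (badd x y hxy) = p z)
    (h2 : p x = p (badd y z hyz)), badd (badd x y hxy) z h1 = badd x (badd y z hyz) h2
  badd_comm : ∀ x y (h : p x = p y) (h' : p y = p x), badd x y h = badd y x h'
  badd_bneg : ∀ x (h : p x = p (bneg x)), badd x (bneg x) h = zero (p x)

attribute [instance] BeckModuleAb.acg

variable {A : Type u} [AddCommGroup A]

/-- Morphisms of abelian group objects in `Ab/A`. -/
@[ext]
structure BeckModuleAb.Hom (X Y : BeckModuleAb A) where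
  toHom : X.E →+ Y.E
  p_comm : ∀ x, Y.p (toHom x) = X.p x
  map_badd : ∀ x y (h : X.p x = X.p y) (h' : Y.p (toHom x) = Y.p (toHom y)),
    toHom (X.badd x y h) = Y.badd (toHom x) (toHom y) h'

instance : Category (BeckModuleAb A) where
  Hom X Y := BeckModuleAb.Hom X Y
  id X := ⟨AddMonoidHom.id _, fun _ => rfl, fun _ _ _ _ => rfl⟩
  comp {X Y Z} f g := ⟨g.toHom.comp f.toHom,
    fun x => by simp [g.p_comm, f.p_comm],
    fun x y h h' => by
      simp only [AddMonoidHom.coe_comp, Function.comp_apply]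
      rw [f.map_badd x y h (by rw [f.p_comm, f.p_comm]; exact h), g.map_badd]⟩
  id_comp f := BeckModuleAb.Hom.ext rfl
  comp_id f := BeckModuleAb.Hom.ext rfl
  assoc f g h := BeckModuleAb.Hom.ext rfl

/-!
Fiberwise addition is forced: evaluating the interchange law `badd_add` on
`x = s + (x - s)`, `y = s + (y - s)` with `s = zero (p x)` gives
`badd x y = x + y - zero (p x)`. So an abelian group object over `A` is nothing but `p` with
the section `zero`, morphisms are the additive maps over `A` preserving the sections, and
`x ↦ (p x, x - zero (p x))` splits `E` as `A × ker p`.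
-/

namespace BeckModuleAb

variable (X : BeckModuleAb A)

lemma badd_congr {x x' y y' : X.E} (hx : x = x') (hy : y = y')
    (h : X.p x = X.p y) (h' : X.p x' = X.p y') : X.badd x y h = X.badd x' y' h' := by
  subst hx hy
  rfl

lemma badd_zero_left {x y : X.E} (hx : x = X.zero (X.p y)) (h : X.p x = X.p y) :
    X.badd x y h = y :=
  (X.badd_congr hx rfl h (by rw [X.p_zero])).trans (X.zero_badd y _)

lemma badd_zero_right {x y : X.E} (hy : y = X.zero (X.p x)) (h : X.p x = X.p y) :
    X.badd x y h = x :=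
  (X.badd_comm x y h h.symm).trans (X.badd_zero_left hy h.symm)

lemma badd_of_mem_ker {x y : X.E} (hx : X.p x = 0) (hy : X.p y = 0) (h : X.p x = X.p y) :
    X.badd x y h = x + y := by
  have hx₀ : (0 : X.E) = X.zero (X.p x) := by rw [hx, map_zero]
  have hy₀ : (0 : X.E) = X.zero (X.p y) := by rw [hy, map_zero]
  calc X.badd x y h = X.badd (0 + x) (y + 0) (by simpa using h) :=
        X.badd_congr (zero_add x).symm (add_zero y).symm _ _
    _ = X.badd 0 y (by rw [map_zero, hy]) + X.badd x 0 (by rw [map_zero, hx]) :=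
        X.badd_add _ _ _ _ _ _ _
    _ = x + y := by rw [X.badd_zero_left hy₀, X.badd_zero_right hx₀, add_comm]

theorem badd_eq (x y : X.E) (h : X.p x = X.p y) :
    X.badd x y h = x + y - X.zero (X.p x) := by
  set s := X.zero (X.p x)
  have hs : X.p s = X.p x := X.p_zero _
  have hx₀ : X.p (x - s) = 0 := by rw [map_sub, hs, sub_self]
  have hy₀ : X.p (y - s) = 0 := by rw [map_sub, hs, h, sub_self]
  calc X.badd x y h = X.badd (s + (x - s)) (s + (y - s)) (by rw [map_add, map_add, hx₀, hy₀]) :=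
        X.badd_congr (by abel) (by abel) _ _
    _ = X.badd s s rfl + X.badd (x - s) (y - s) (hx₀.trans hy₀.symm) :=
        X.badd_add _ _ _ _ _ _ _
    _ = s + ((x - s) + (y - s)) := by
        rw [X.badd_zero_left (by rw [hs]), X.badd_of_mem_ker hx₀ hy₀]
    _ = x + y - s := by abel

abbrev ofSection {E : Type u} [AddCommGroup E] (p : E →+ A) (s : A →+ E)
    (hs : ∀ a, p (s a) = a) : BeckModuleAb A where
  E := E
  p := p
  zero := s
  bneg := (s.comp p + s.comp p) - AddMonoidHom.id E
  badd x y _ := x + y - s (p x)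
  p_zero := hs
  p_bneg x := by simp [hs]
  p_badd x y h := by simp [hs, h]
  badd_add x y x' y' _ _ _ := by simp only [map_add]; abel
  zero_badd x _ := by simp [hs]
  badd_assoc x y z hxy _ _ _ := by simp only [map_add, map_sub, hs, ← hxy]; abel
  badd_comm x y h _ := by
    show x + y - s (p x) = y + x - s (p y)
    rw [h, add_comm]
  badd_bneg x _ := by simp only [AddMonoidHom.sub_apply, AddMonoidHom.add_apply,
    AddMonoidHom.coe_comp, Function.comp_apply, AddMonoidHom.id_apply]; abel

abbrev prod (M : Type u) [AddCommGroup M] : BeckModuleAb A :=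
  ofSection (AddMonoidHom.fst A M) (AddMonoidHom.inl A M) fun _ => rfl

variable {X} {Y : BeckModuleAb A}

@[ext]
lemma hom_ext {f g : X ⟶ Y} (h : ∀ x, f.toHom x = g.toHom x) : f = g :=
  Hom.ext (AddMonoidHom.ext h)

lemma Hom.map_zero_section (f : X ⟶ Y) (a : A) : f.toHom (X.zero a) = Y.zero a := by
  have h := f.map_badd (X.zero a) (X.zero a) rfl (by rw [f.p_comm])
  rw [X.badd_zero_left (by rw [X.p_zero]), Y.badd_eq, f.p_comm, X.p_zero,
    eq_sub_iff_add_eq] at h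
  exact (add_left_cancel h).symm

def homMk (f : X.E →+ Y.E) (hp : ∀ x, Y.p (f x) = X.p x)
    (hz : ∀ a, f (X.zero a) = Y.zero a) : X ⟶ Y where
  toHom := f
  p_comm := hp
  map_badd x y h _ := by rw [X.badd_eq, Y.badd_eq, map_sub, map_add, hz, hp]

def isoMk (e : X.E ≃+ Y.E) (hp : ∀ x, Y.p (e x) = X.p x)
    (hz : ∀ a, e (X.zero a) = Y.zero a) : X ≅ Y where
  hom := homMk e.toAddMonoidHom hp hz
  inv := homMk e.symm.toAddMonoidHom (fun y => by
      rw [AddEquiv.coe_toAddMonoidHom, ← hp, e.apply_symm_apply])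
    (fun a => by rw [AddEquiv.coe_toAddMonoidHom, e.symm_apply_eq, hz])
  hom_inv_id := by ext; exact e.symm_apply_apply _
  inv_hom_id := by ext; exact e.apply_symm_apply _

variable (X)

def splitEquiv : X.E ≃+ A × AddMonoidHom.ker X.p where
  toFun x := (X.p x, ⟨x - X.zero (X.p x), by simp [X.p_zero]⟩)
  invFun z := X.zero z.1 + z.2
  left_inv x := by simp
  right_inv z := by
    have hz : X.p z.2 = 0 := z.2.2
    ext <;> simp [X.p_zero, hz]
  map_add' x y := by
    ext
    · simp
    · simp only [map_add, Prod.snd_add, AddSubgroup.coe_add]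
      abel

def isoProdKer : X ≅ prod (AddMonoidHom.ker X.p) :=
  isoMk X.splitEquiv (fun _ => rfl) fun a =>
    Prod.ext (X.p_zero a) (Subtype.ext (by simp [splitEquiv, X.p_zero]))

def kerFunctor : BeckModuleAb A ⥤ AddCommGrpCat.{u} where
  obj X := AddCommGrpCat.of (AddMonoidHom.ker X.p)
  map {X Y} f := AddCommGrpCat.ofHom <|
    (f.toHom.comp (AddMonoidHom.ker X.p).subtype).codRestrict _ fun k =>
      (f.p_comm k).trans k.2

def prodFunctor : AddCommGrpCat.{u} ⥤ BeckModuleAb A where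
  obj M := prod M
  map f := homMk ((AddMonoidHom.id A).prodMap f.hom) (fun _ => rfl) fun _ => by simp

end BeckModuleAb

open BeckModuleAb

def kerFstEquiv (M : Type u) [AddCommGroup M] : AddMonoidHom.ker (AddMonoidHom.fst A M) ≃+ M where
  toFun k := k.1.2
  invFun m := ⟨(0, m), rfl⟩
  left_inv k := Subtype.ext (Prod.ext (k.2 : k.1.1 = 0).symm rfl)
  map_add' _ _ := rfl

def kerProdEquivalence : BeckModuleAb A ≌ AddCommGrpCat.{u} :=
  CategoryTheory.Equivalence.mk kerFunctor prodFunctor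
    (NatIso.ofComponents isoProdKer fun {X Y} f => by
      ext (x : X.E)
      refine Prod.ext (f.p_comm x) (Subtype.ext ?_)
      show f.toHom x - Y.zero (Y.p (f.toHom x)) = f.toHom (x - X.zero (X.p x))
      rw [map_sub, f.p_comm, f.map_zero_section])
    (NatIso.ofComponents fun M => (kerFstEquiv (A := A) M).toAddCommGrpIso)

/-- The category of abelian group objects in `Ab/A` is equivalent to `Ab`:
the forward functor sends an abelian group object `p : E →+ A` to `ker p`, and the inverse
sends an abelian group `M` to the projection `A ⊕ M → A`. -/
theorem beckModuleAb_equivalence_ab (A : Type) [AddCommGroup A] :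
    ∃ e : BeckModuleAb A ≌ AddCommGrpCat,
      (∀ X : BeckModuleAb A,
        Nonempty ((e.functor.obj X : Type) ≃+ AddMonoidHom.ker X.p)) ∧
      (∀ M : AddCommGrpCat,
        ∃ ψ : (e.inverse.obj M).E ≃+ A × (M : Type),
          ∀ x, (e.inverse.obj M).p x = (ψ x).1) :=
  ⟨kerProdEquivalence, fun _ => ⟨AddEquiv.refl _⟩, fun _ => ⟨AddEquiv.refl _, fun _ => rfl⟩⟩
end

section
/- Let ⋯ → X₂ → X₁ → X₀ be a tower of Kan fibrations between Kan complexes such that each map X_{k} → X_{k-1} is a weak equivalence for all k ≥ n (for some fixed n ≥ 1). Then the projection from the inverse limit, lim_k X_k → X_{n-1}, is a trivial fibration; in particular it is a weak equivalence. -/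
open CategoryTheory Limits
open scoped Simplicial

/-- A map of simplicial sets is a Kan fibration if it has the right lifting property
with respect to all horn inclusions. -/
def IsKanFibration {X Y : SSet} (f : X ⟶ Y) : Prop :=
  ∀ (n : ℕ) (i : Fin (n + 1)) (u : (Λ[n, i] : SSet) ⟶ X) (v : Δ[n] ⟶ Y),
    u ≫ f = Λ[n, i].ι ≫ v →
    ∃ w : Δ[n] ⟶ X, Λ[n, i].ι ≫ w = u ∧ w ≫ f = v

/-- A map of simplicial sets is a trivial fibration if it has the right lifting property
with respect to all boundary inclusions `∂Δ[n] ⟶ Δ[n]`.  (For a Kan fibration between Kan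
complexes this is equivalent to being a weak equivalence.) -/
def IsTrivialFibration {X Y : SSet} (f : X ⟶ Y) : Prop :=
  ∀ (n : ℕ) (u : (∂Δ[n] : SSet) ⟶ X) (v : Δ[n] ⟶ Y),
    u ≫ f = ∂Δ[n].ι ≫ v →
    ∃ w : Δ[n] ⟶ X, ∂Δ[n].ι ≫ w = u ∧ w ≫ f = v

/-- The Kan complex condition as `SSet.KanComplex` stated it in the older Mathlib:
horn filling for all `n : ℕ` and `i : Fin (n + 1)` (including `n = 0`). -/
def SSet.KanComplex' (S : SSet) : Prop :=
  ∀ ⦃n : ℕ⦄ ⦃i : Fin (n + 1)⦄ (σ₀ : (Λ[n, i] : SSet) ⟶ S),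
    ∃ σ : Δ[n] ⟶ S, σ₀ = Λ[n, i].ι ≫ σ

/-!
Read in the opposite category, the projection `lim_k X_k → X_m` is the ω-indexed transfinite
composition of the maps opposite to `X_{k+1} → X_k`, `k ≥ m`, and left lifting properties are
stable under transfinite composition. So a right lifting property against `∂Δ[d] ⟶ Δ[d]` shared
by these maps passes to the projection.
-/

namespace CategoryTheory

theorem HasLiftingProperty.ι_app_of_sequence {D : Type*} [Category D] {G : ℕ ⥤ D}
    {c : Cocone G} (hc : IsColimit c) {Y Z : D} (p : Y ⟶ Z) (m : ℕ)
    (hG : ∀ k, m ≤ k → HasLiftingProperty (G.map (homOfLE (Nat.le_succ k))) p) :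
    HasLiftingProperty (c.ι.app m) p := by
  -- Shift by `m` rather than restrict to `Set.Ici m`, whose `⊥` is not definitionally `m`.
  have hshift : Monotone (m + ·) := fun _ _ h => Nat.add_le_add_left h m
  have : hshift.functor.Final :=
    (Monotone.final_functor_iff hshift).2 fun k => ⟨k, Nat.le_add_left k m⟩
  exact HasLiftingProperty.transfiniteComposition.hasLiftingProperty_ι_app_bot
    (c := c.whisker hshift.functor) ((Functor.Final.isColimitWhiskerEquiv _ c).2 hc)
    fun k _ => hG (m + k) (Nat.le_add_right m k)

theorem HasLiftingProperty.π_app_of_tower {C : Type*} [Category C] {X : ℕ → C}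
    (f : ∀ k, X (k + 1) ⟶ X k) {c : Cone (Functor.ofSequence fun k => (f k).op).leftOp}
    (hc : IsLimit c) {A B : C} (i : A ⟶ B) (m : ℕ)
    (hf : ∀ k, m ≤ k → HasLiftingProperty i (f k)) :
    HasLiftingProperty i (c.π.app (Opposite.op m)) :=
  HasLiftingProperty.iff_op.2 <|
    ι_app_of_sequence (isColimitCoconeOfConeLeftOp _ hc) i.op m fun k hk => by
      rw [Functor.ofSequence_map_homOfLE_succ]
      exact (hf k hk).op

end CategoryTheory

theorem isTrivialFibration_iff_hasLiftingProperty {X Y : SSet} (f : X ⟶ Y) :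
    IsTrivialFibration f ↔ ∀ n, HasLiftingProperty ∂Δ[n].ι f := by
  refine ⟨fun hf n => ⟨fun {u v} sq => ?_⟩, fun hf n u v huv => ?_⟩
  · obtain ⟨w, hw₁, hw₂⟩ := hf n u v sq.w
    exact ⟨⟨⟨w, hw₁, hw₂⟩⟩⟩
  · have sq : CommSq u ∂Δ[n].ι f v := ⟨huv⟩
    exact ⟨sq.lift, sq.fac_left, sq.fac_right⟩

theorem tower_limit_projection_trivial_fibration_general
    (X : ℕ → SSet) (f : ∀ k, X (k + 1) ⟶ X k)
    (n : ℕ)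
    (hweq : ∀ k, n ≤ k + 1 → IsTrivialFibration (f k)) :
    IsTrivialFibration
      (limit.π (Functor.ofSequence (fun k => (f k).op)).leftOp (Opposite.op (n - 1))) := by
  rw [isTrivialFibration_iff_hasLiftingProperty]
  intro d
  exact HasLiftingProperty.π_app_of_tower f (limit.isLimit _) _ (n - 1) fun k hk =>
    (isTrivialFibration_iff_hasLiftingProperty _).1 (hweq k (by omega)) d

/-- Let `⋯ → X₂ → X₁ → X₀` be a tower of Kan fibrations between Kan complexes such that each
map `X_k → X_{k-1}` is a weak equivalence (equivalently, for these Kan fibrations: a trivial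
fibration) for all `k ≥ n`.  Then the projection `lim_k X_k → X_{n-1}` from the inverse limit
is a trivial fibration; in particular it is a weak equivalence. -/
theorem tower_limit_projection_trivial_fibration
    (X : ℕ → SSet) (f : ∀ k, X (k + 1) ⟶ X k)
    (hKan : ∀ k, SSet.KanComplex' (X k))
    (hfib : ∀ k, IsKanFibration (f k))
    (n : ℕ) (hn : 1 ≤ n)
    (hweq : ∀ k, n ≤ k + 1 → IsTrivialFibration (f k)) :
    IsTrivialFibration
      (limit.π (Functor.ofSequence (fun k => (f k).op)).leftOp (Opposite.op (n - 1))) :=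
  tower_limit_projection_trivial_fibration_general X f n hweq
end
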